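/- arXiv:1305.3204 — 6 statements merged into one kernel-verified Lean document; each statement's English description precedes it below -/
import Mathlib

section
/- For a finite strictly monotonic timed word ρ, a position i, and a nonnegative integer l: ρ,i ⊨ F_{[l,∞)}φ if and only if τ_i ≤ L^φ(ρ) − l and τ_i < L^φ(ρ), where L^φ(ρ) is the timestamp of the last position of ρ satisfying φ (with convention L^φ(ρ)=τ_1=0 if no position satisfies φ). -/
theorem exists_lt_future_iff_of_isGreatest {ι : Type*} [LinearOrder ι] {τ : ι → ℝ}
    (hτ : StrictMono τ) {φ : ι → Prop} {j : ι} (hj : IsGreatest {k | φ k} j) (i : ι) (c : ℝ) :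
    (∃ k, i < k ∧ φ k ∧ c ≤ τ k - τ i) ↔ τ i ≤ τ j - c ∧ τ i < τ j := by
  constructor
  · rintro ⟨k, hik, hφk, hck⟩
    have hkj : τ k ≤ τ j := hτ.monotone (hj.2 hφk)
    exact ⟨by linarith, (hτ hik).trans_le hkj⟩
  · rintro ⟨hc, hij⟩
    exact ⟨j, hτ.lt_iff_lt.mp hij, hj.1, by linarith⟩

theorem mitl_lowerbound_future_closed_general {n : ℕ} (hn : 0 < n)
    (τ : Fin n → ℝ) (hmono : StrictMono τ) (h0 : τ ⟨0, hn⟩ = 0)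
    (φ : Fin n → Prop) (l : ℕ) (i : Fin n) (L : ℝ)
    (hL : (∃ j : Fin n, φ j ∧ τ j = L ∧ ∀ k : Fin n, φ k → k ≤ j) ∨
          ((∀ j : Fin n, ¬ φ j) ∧ L = 0)) :
    (∃ j : Fin n, i < j ∧ φ j ∧ (l : ℝ) ≤ τ j - τ i) ↔
      (τ i ≤ L - (l : ℝ) ∧ τ i < L) := by
  rcases hL with ⟨j, hφj, rfl, hmax⟩ | ⟨hnone, rfl⟩
  · exact exists_lt_future_iff_of_isGreatest hmono ⟨hφj, hmax⟩ i l
  · have hi : 0 ≤ τ i := h0 ▸ hmono.monotone (Fin.mk_le_mk.mpr (Nat.zero_le i))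
    simp only [hnone, false_and, and_false, exists_false, false_iff, not_and, not_lt]
    exact fun _ => hi

/-- For a finite strictly monotonic timed word ρ (timestamps `τ`, first
timestamp 0), a position `i`, and a nonnegative integer `l`:
ρ,i ⊨ F_{[l,∞)}φ iff τ i ≤ L^φ(ρ) − l and τ i < L^φ(ρ), where `L` is the timestamp of
the last position satisfying φ (convention: `L = 0` when no position satisfies φ). -/
theorem mitl_lowerbound_future_closed {A : Type} {n : ℕ} (hn : 0 < n)
    (σ : Fin n → A) (τ : Fin n → ℝ) (hmono : StrictMono τ) (h0 : τ ⟨0, hn⟩ = 0)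
    (φ : Fin n → Prop) (l : ℕ) (i : Fin n) (L : ℝ)
    (hL : (∃ j : Fin n, φ j ∧ τ j = L ∧ ∀ k : Fin n, φ k → k ≤ j) ∨
          ((∀ j : Fin n, ¬ φ j) ∧ L = 0)) :
    (∃ j : Fin n, i < j ∧ φ j ∧ (l : ℝ) ≤ τ j - τ i) ↔
      (τ i ≤ L - (l : ℝ) ∧ τ i < L) :=
  mitl_lowerbound_future_closed_general hn τ hmono h0 φ l i L hL
end

section
/- For a finite strictly monotonic timed word ρ, a position i, and a nonnegative integer l: ρ,i ⊨ F_{(l,∞)}φ if and only if τ_i < L^φ(ρ) − l, where L^φ(ρ) is the timestamp of the last position of ρ satisfying φ (with convention L^φ(ρ)=0 if no position satisfies φ). -/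
section

variable {ι β : Type*} [LinearOrder ι] [AddCommGroup β] [LinearOrder β] [IsOrderedAddMonoid β]

/-- The future operator with an open lower bound `c ≥ 0` only has to look at the last
position satisfying `φ`: any later witness is at most that far away, and that position itself
lies in the future of `i` once it is more than `c` ahead of `i`. -/
theorem exists_lt_and_lt_sub_iff_of_isGreatest {τ : ι → β} (hτ : StrictMono τ) {φ : ι → Prop}
    {j : ι} (hj : IsGreatest {k | φ k} j) {c : β} (hc : 0 ≤ c) (i : ι) :
    (∃ k, i < k ∧ φ k ∧ c < τ k - τ i) ↔ τ i < τ j - c := by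
  constructor
  · rintro ⟨k, -, hφk, hk⟩
    have hkj : τ k ≤ τ j := hτ.monotone (hj.2 hφk)
    rw [lt_sub_comm] at hk
    exact hk.trans_le (sub_le_sub_right hkj _)
  · intro hi
    have hij : τ i < τ j := hi.trans_le (sub_le_self _ hc)
    exact ⟨j, hτ.lt_iff_lt.mp hij, hj.1, lt_sub_comm.mp hi⟩

end

theorem mitl_lowerbound_future_open_general {n : ℕ} (hn : 0 < n)
    (τ : Fin n → ℝ) (hmono : StrictMono τ) (h0 : τ ⟨0, hn⟩ = 0)
    (φ : Fin n → Prop) (l : ℕ) (i : Fin n) (L : ℝ)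
    (hL : (∃ j : Fin n, φ j ∧ τ j = L ∧ ∀ k : Fin n, φ k → k ≤ j) ∨
          ((∀ j : Fin n, ¬ φ j) ∧ L = 0)) :
    (∃ j : Fin n, i < j ∧ φ j ∧ (l : ℝ) < τ j - τ i) ↔ τ i < L - (l : ℝ) := by
  rcases hL with ⟨j, hφj, rfl, hmax⟩ | ⟨hno, rfl⟩
  · exact exists_lt_and_lt_sub_iff_of_isGreatest hmono ⟨hφj, hmax⟩ l.cast_nonneg i
  · have hτi : 0 ≤ τ i := h0 ▸ hmono.monotone (Fin.mk_le_of_le_val (Nat.zero_le _))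
    have hl : (0 : ℝ) ≤ l := l.cast_nonneg
    simp only [hno, false_and, and_false, exists_false, false_iff, not_lt]
    linarith

/-- ρ,i ⊨ F_{(l,∞)}φ iff τ i < L^φ(ρ) − l, where `L` is the timestamp of
the last position of the strictly monotonic timed word ρ satisfying φ
(convention: `L = 0` when no position satisfies φ). -/
theorem mitl_lowerbound_future_open {A : Type} {n : ℕ} (hn : 0 < n)
    (σ : Fin n → A) (τ : Fin n → ℝ) (hmono : StrictMono τ) (h0 : τ ⟨0, hn⟩ = 0)
    (φ : Fin n → Prop) (l : ℕ) (i : Fin n) (L : ℝ)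
    (hL : (∃ j : Fin n, φ j ∧ τ j = L ∧ ∀ k : Fin n, φ k → k ≤ j) ∨
          ((∀ j : Fin n, ¬ φ j) ∧ L = 0)) :
    (∃ j : Fin n, i < j ∧ φ j ∧ (l : ℝ) < τ j - τ i) ↔ τ i < L - (l : ℝ) :=
  mitl_lowerbound_future_open_general hn τ hmono h0 φ l i L hL
end

section
/- For a finite strictly monotonic timed word ρ, a position i, and a nonnegative integer l: ρ,i ⊨ P_{[l,∞)}φ if and only if τ_i ≥ F^φ(ρ) + l and τ_i > F^φ(ρ), where F^φ(ρ) is the timestamp of the first position of ρ satisfying φ (with convention F^φ(ρ) = τ_{#ρ} if no position satisfies φ). -/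
/-!
Since τ is strictly monotone, some φ-position j < i with τ i - τ j ≥ l exists iff the first
φ-position j₀ works, i.e. iff τ j₀ < τ i and τ j₀ + l ≤ τ i. When φ never holds both sides are
false: the left trivially, the right because `F` is then the largest timestamp.
-/

theorem exists_lt_and_le_sub_iff_of_isLeast {ι α : Type*} [LinearOrder ι] [AddCommGroup α]
    [LinearOrder α] [IsOrderedAddMonoid α] {τ : ι → α} (hτ : StrictMono τ) {φ : ι → Prop}
    {j₀ : ι} (hj₀ : IsLeast {k | φ k} j₀) (l : α) (i : ι) :
    (∃ j < i, φ j ∧ l ≤ τ i - τ j) ↔ τ j₀ + l ≤ τ i ∧ τ j₀ < τ i := by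
  simp only [le_sub_iff_add_le']
  constructor
  · rintro ⟨j, hji, hφj, hl⟩
    have hj₀j : τ j₀ ≤ τ j := hτ.monotone (hj₀.2 hφj)
    exact ⟨(add_le_add_left hj₀j l).trans hl, hj₀j.trans_lt (hτ hji)⟩
  · rintro ⟨hl, hlt⟩
    exact ⟨j₀, hτ.lt_iff_lt.mp hlt, hj₀.1, hl⟩

theorem mitl_lowerbound_past_closed_general {n : ℕ} (hn : 0 < n)
    (τ : Fin n → ℝ) (hmono : StrictMono τ)
    (φ : Fin n → Prop) (l : ℕ) (i : Fin n) (F : ℝ)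
    (hF : (∃ j : Fin n, φ j ∧ τ j = F ∧ ∀ k : Fin n, φ k → j ≤ k) ∨
          ((∀ j : Fin n, ¬ φ j) ∧ F = τ ⟨n - 1, Nat.sub_lt hn one_pos⟩)) :
    (∃ j : Fin n, j < i ∧ φ j ∧ (l : ℝ) ≤ τ i - τ j) ↔
      (F + (l : ℝ) ≤ τ i ∧ F < τ i) := by
  rcases hF with ⟨j₀, hφj₀, rfl, hmin⟩ | ⟨hno, rfl⟩
  · exact exists_lt_and_le_sub_iff_of_isLeast hmono ⟨hφj₀, hmin⟩ l i
  · have hi_le_last : τ i ≤ τ ⟨n - 1, Nat.sub_lt hn one_pos⟩ :=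
      hmono.monotone (Fin.mk_le_mk.mpr (Nat.le_sub_one_of_lt i.isLt))
    exact iff_of_false (fun ⟨j, _, hφj, _⟩ => hno j hφj) fun h => h.2.not_ge hi_le_last

/-- ρ,i ⊨ P_{[l,∞)}φ iff τ i ≥ F^φ(ρ) + l and τ i > F^φ(ρ), where `F` is
the timestamp of the first position of the strictly monotonic timed word ρ satisfying φ
(convention: `F = τ_{#ρ}`, the last timestamp, when no position satisfies φ). -/
theorem mitl_lowerbound_past_closed {A : Type} {n : ℕ} (hn : 0 < n)
    (σ : Fin n → A) (τ : Fin n → ℝ) (hmono : StrictMono τ) (h0 : τ ⟨0, hn⟩ = 0)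
    (φ : Fin n → Prop) (l : ℕ) (i : Fin n) (F : ℝ)
    (hF : (∃ j : Fin n, φ j ∧ τ j = F ∧ ∀ k : Fin n, φ k → j ≤ k) ∨
          ((∀ j : Fin n, ¬ φ j) ∧ F = τ ⟨n - 1, Nat.sub_lt hn one_pos⟩)) :
    (∃ j : Fin n, j < i ∧ φ j ∧ (l : ℝ) ≤ τ i - τ j) ↔
      (F + (l : ℝ) ≤ τ i ∧ F < τ i) :=
  mitl_lowerbound_past_closed_general hn τ hmono φ l i F hF
end

section
/- For a finite strictly monotonic timed word ρ, a position i, and a nonnegative integer l: ρ,i ⊨ P_{(l,∞)}φ if and only if τ_i > F^φ(ρ) + l, where F^φ(ρ) is the timestamp of the first position of ρ satisfying φ (with convention F^φ(ρ) = τ_{#ρ} if no position satisfies φ). -/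
theorem exists_lt_and_lt_sub_iff_of_isLeast {α : Type*} [LinearOrder α] {τ : α → ℝ}
    (hmono : StrictMono τ) {φ : α → Prop} {j₀ : α} (hj₀ : IsLeast {j | φ j} j₀)
    {l : ℝ} (hl : 0 ≤ l) (i : α) :
    (∃ j, j < i ∧ φ j ∧ l < τ i - τ j) ↔ τ j₀ + l < τ i := by
  constructor
  · rintro ⟨j, -, hφj, hlt⟩
    have : τ j₀ ≤ τ j := hmono.monotone (hj₀.2 hφj)
    linarith
  · intro hlt
    have hj₀i : j₀ < i := hmono.lt_iff_lt.mp (by linarith)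
    exact ⟨j₀, hj₀i, hj₀.1, by linarith⟩

theorem mitl_lowerbound_past_open_general {n : ℕ} (hn : 0 < n)
    (τ : Fin n → ℝ) (hmono : StrictMono τ)
    (φ : Fin n → Prop) (l : ℕ) (i : Fin n) (F : ℝ)
    (hF : (∃ j : Fin n, φ j ∧ τ j = F ∧ ∀ k : Fin n, φ k → j ≤ k) ∨
          ((∀ j : Fin n, ¬ φ j) ∧ F = τ ⟨n - 1, Nat.sub_lt hn one_pos⟩)) :
    (∃ j : Fin n, j < i ∧ φ j ∧ (l : ℝ) < τ i - τ j) ↔ F + (l : ℝ) < τ i := by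
  rcases hF with ⟨j₀, hφj₀, rfl, hmin⟩ | ⟨hnone, rfl⟩
  · exact exists_lt_and_lt_sub_iff_of_isLeast hmono ⟨hφj₀, hmin⟩ l.cast_nonneg i
  · have hi : τ i ≤ τ ⟨n - 1, Nat.sub_lt hn one_pos⟩ :=
      hmono.monotone (Fin.le_def.mpr (Nat.le_sub_one_of_lt i.isLt))
    simp only [hnone, false_and, and_false, exists_false, false_iff, not_lt]
    linarith [l.cast_nonneg (α := ℝ)]

/-- ρ,i ⊨ P_{(l,∞)}φ iff τ i > F^φ(ρ) + l, where `F` is the timestamp of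
the first position of the strictly monotonic timed word ρ satisfying φ
(convention: `F = τ_{#ρ}` when no position satisfies φ). -/
theorem mitl_lowerbound_past_open {A : Type} {n : ℕ} (hn : 0 < n)
    (σ : Fin n → A) (τ : Fin n → ℝ) (hmono : StrictMono τ) (h0 : τ ⟨0, hn⟩ = 0)
    (φ : Fin n → Prop) (l : ℕ) (i : Fin n) (F : ℝ)
    (hF : (∃ j : Fin n, φ j ∧ τ j = F ∧ ∀ k : Fin n, φ k → j ≤ k) ∨
          ((∀ j : Fin n, ¬ φ j) ∧ F = τ ⟨n - 1, Nat.sub_lt hn one_pos⟩)) :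
    (∃ j : Fin n, j < i ∧ φ j ∧ (l : ℝ) < τ i - τ j) ↔ F + (l : ℝ) < τ i :=
  mitl_lowerbound_past_open_general hn τ hmono φ l i F hF
end

section
/- Over strictly monotonic timed words, if condition (1a) holds for position i with τ_i ∈ [r,r+1), namely τ_i < L^φ_{[r+l,r+l+1)}(ρ) and τ_i ∈ [r, L^φ_{[r+l,r+l+1)}(ρ) − l⟩_a, then ρ,i ⊨ F_{⟨_a l, l+1⟩_b} φ. (Here ⟨_a and ⟩_b record the openness/closeness of the endpoints of the interval ⟨l,l+1⟩.) -/
/-- Membership in a lower bound `⟨l, _` of an interval: strict if the bracket is open. -/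
def lbMem (o : Bool) (l t : ℝ) : Prop := if o then l < t else l ≤ t

/-- Membership in an upper bound `_, u⟩` of an interval: strict if the bracket is open. -/
def ubMem (o : Bool) (u t : ℝ) : Prop := if o then t < u else t ≤ u

/-- `L` is L^φ_I(ρ): the timestamp of the maximal position of ρ satisfying φ with
timestamp in `I` (convention: max(∅) = position 1, so `L = τ_1 = 0` if none). -/
def IsLastIn {n : ℕ} (τ : Fin n → ℝ) (φ : Fin n → Prop) (I : Set ℝ) (L : ℝ) : Prop :=
  (∃ j, φ j ∧ τ j ∈ I ∧ τ j = L ∧ ∀ k, φ k → τ k ∈ I → k ≤ j) ∨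
    ((∀ j, ¬ (φ j ∧ τ j ∈ I)) ∧ L = 0)

/-- `F` is F^φ_I(ρ): the timestamp of the minimal position of ρ satisfying φ with
timestamp in `I` (convention: min(∅) = #ρ, so `F = τ_{#ρ}` if none). -/
def IsFirstIn {n : ℕ} (hn : 0 < n) (τ : Fin n → ℝ) (φ : Fin n → Prop) (I : Set ℝ)
    (F : ℝ) : Prop :=
  (∃ j, φ j ∧ τ j ∈ I ∧ τ j = F ∧ ∀ k, φ k → τ k ∈ I → j ≤ k) ∨
    ((∀ j, ¬ (φ j ∧ τ j ∈ I)) ∧ F = τ ⟨n - 1, Nat.sub_lt hn one_pos⟩)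


theorem ubMem_sub_iff_lbMem_sub (o : Bool) (u l t : ℝ) :
    ubMem o (u - l) t ↔ lbMem o l (u - t) := by
  cases o <;> simp only [ubMem, lbMem, Bool.false_eq_true, if_true, if_false] <;>
    constructor <;> intro h <;> linarith

theorem ubMem_of_lt (o : Bool) {u t : ℝ} (h : t < u) : ubMem o u t := by
  cases o
  · exact h.le
  · exact h

theorem IsLastIn.exists_of_ne_zero {n : ℕ} {τ : Fin n → ℝ} {φ : Fin n → Prop} {I : Set ℝ}
    {L : ℝ} (h : IsLastIn τ φ I L) (hL : L ≠ 0) : ∃ j, φ j ∧ τ j ∈ I ∧ τ j = L := by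
  rcases h with ⟨j, hφ, hI, hjL, -⟩ | ⟨-, hL0⟩
  · exact ⟨j, hφ, hI, hjL⟩
  · exact absurd hL0 hL

theorem bounded_unit_future_of_1a_general {n : ℕ} (hn : 0 < n)
    (τ : Fin n → ℝ) (hmono : StrictMono τ) (h0 : τ ⟨0, hn⟩ = 0)
    (φ : Fin n → Prop) (r l : ℤ) (aO bO : Bool) (i : Fin n)
    (L1 : ℝ)
    (hL1 : IsLastIn τ φ (Set.Ico ((r : ℝ) + l) ((r : ℝ) + l + 1)) L1)
    (h1a : τ i < L1 ∧ (r : ℝ) ≤ τ i ∧ ubMem aO (L1 - (l : ℝ)) (τ i)) :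
    ∃ j, i < j ∧ φ j ∧ lbMem aO (l : ℝ) (τ j - τ i) ∧
      ubMem bO ((l : ℝ) + 1) (τ j - τ i) := by
  obtain ⟨hlt, hr, hub⟩ := h1a
  have hL1_ne : L1 ≠ 0 := by
    have : τ ⟨0, hn⟩ ≤ τ i := hmono.monotone (Nat.zero_le i.val)
    linarith
  obtain ⟨j, hφ, ⟨-, hju⟩, rfl⟩ := hL1.exists_of_ne_zero hL1_ne
  exact ⟨j, hmono.lt_iff_lt.mp hlt, hφ, (ubMem_sub_iff_lbMem_sub aO _ _ _).mp hub,
    ubMem_of_lt bO (by linarith)⟩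

/-- if condition (1a) holds for position i with τ_i ∈ [r,r+1), namely
τ_i < L^φ_{[r+l,r+l+1)}(ρ) and τ_i ∈ [r, L^φ_{[r+l,r+l+1)}(ρ) − l⟩_a, then
ρ,i ⊨ F_{⟨_a l, l+1⟩_b} φ. -/
theorem bounded_unit_future_of_1a {n : ℕ} (hn : 0 < n)
    (τ : Fin n → ℝ) (hmono : StrictMono τ) (h0 : τ ⟨0, hn⟩ = 0)
    (φ : Fin n → Prop) (r l : ℤ) (aO bO : Bool) (i : Fin n)
    (hri : (r : ℝ) ≤ τ i ∧ τ i < (r : ℝ) + 1)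
    (L1 : ℝ)
    (hL1 : IsLastIn τ φ (Set.Ico ((r : ℝ) + l) ((r : ℝ) + l + 1)) L1)
    (h1a : τ i < L1 ∧ (r : ℝ) ≤ τ i ∧ ubMem aO (L1 - (l : ℝ)) (τ i)) :
    ∃ j, i < j ∧ φ j ∧ lbMem aO (l : ℝ) (τ j - τ i) ∧
      ubMem bO ((l : ℝ) + 1) (τ j - τ i) :=
  bounded_unit_future_of_1a_general hn τ hmono h0 φ r l aO bO i L1 hL1 h1a
end

section
/- If ρ,i ⊨ F_{⟨_a l,l+1⟩_b} φ with τ_i ∈ [r,r+1) for integers r,l ≥ 0, and Idx^φ_{[r+l+1,r+l+2)}(ρ) = ∅, then condition (1a) holds: τ_i < L^φ_{[r+l,r+l+1)}(ρ) and τ_i ∈ [r, L^φ_{[r+l,r+l+1)}(ρ) − l⟩_a. -/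
/-! A witness `j` of the future modality lies `l` to `l + 1` after `τ i ∈ [r, r + 1)`, so
`τ j ∈ [r + l, r + l + 2)`; the empty upper unit interval forces `τ j ∈ [r + l, r + l + 1)`.
Hence `τ j ≤ L`, and the lower bound `⟨l` on `τ j - τ i` transfers to the upper bound
`L - l⟩` on `τ i` with the same strictness. -/

theorem lbMem.le {o : Bool} {l t : ℝ} (h : lbMem o l t) : l ≤ t := by
  cases o
  · exact h
  · exact le_of_lt h

theorem ubMem.le {o : Bool} {u t : ℝ} (h : ubMem o u t) : t ≤ u := by
  cases o
  · exact h
  · exact le_of_lt h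

theorem ubMem_sub_of_lbMem_sub {o : Bool} {l s t L : ℝ} (h : lbMem o l (t - s))
    (htL : t ≤ L) : ubMem o (L - l) s := by
  cases o <;> simp only [lbMem, ubMem, Bool.false_eq_true, if_true, if_false] at h ⊢ <;>
    linarith

theorem IsLastIn.le {n : ℕ} {τ : Fin n → ℝ} {φ : Fin n → Prop} {I : Set ℝ} {L : ℝ}
    (hL : IsLastIn τ φ I L) (hτ : Monotone τ) {j : Fin n} (hj : φ j) (hjI : τ j ∈ I) :
    τ j ≤ L := by
  rcases hL with ⟨k, -, -, rfl, hmax⟩ | ⟨hnone, -⟩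
  · exact hτ (hmax j hj hjI)
  · exact absurd ⟨hj, hjI⟩ (hnone j)

theorem bounded_unit_future_1a_of_empty_general {n : ℕ}
    (τ : Fin n → ℝ) (hmono : StrictMono τ)
    (φ : Fin n → Prop) (r l : ℤ) (aO bO : Bool) (i : Fin n)
    (hri : (r : ℝ) ≤ τ i ∧ τ i < (r : ℝ) + 1)
    (L1 : ℝ)
    (hL1 : IsLastIn τ φ (Set.Ico ((r : ℝ) + l) ((r : ℝ) + l + 1)) L1)
    (hempty : ∀ j, ¬ (φ j ∧ τ j ∈ Set.Ico ((r : ℝ) + l + 1) ((r : ℝ) + l + 2)))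
    (hsat : ∃ j, i < j ∧ φ j ∧ lbMem aO (l : ℝ) (τ j - τ i) ∧
        ubMem bO ((l : ℝ) + 1) (τ j - τ i)) :
    τ i < L1 ∧ (r : ℝ) ≤ τ i ∧ ubMem aO (L1 - (l : ℝ)) (τ i) := by
  obtain ⟨j, hij, hφj, hlb, hub⟩ := hsat
  have hj : τ j ∈ Set.Ico ((r : ℝ) + l) ((r : ℝ) + l + 1) := by
    refine ⟨by linarith [hlb.le], not_le.1 fun hge => hempty j ⟨hφj, hge, ?_⟩⟩
    linarith [hub.le]
  have hjL : τ j ≤ L1 := hL1.le hmono.monotone hφj hj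
  exact ⟨(hmono hij).trans_le hjL, hri.1, ubMem_sub_of_lbMem_sub hlb hjL⟩

/-- if ρ,i ⊨ F_{⟨_a l,l+1⟩_b} φ with τ_i ∈ [r,r+1) for integers
r,l ≥ 0, and Idx^φ_{[r+l+1,r+l+2)}(ρ) = ∅, then condition (1a) holds:
τ_i < L^φ_{[r+l,r+l+1)}(ρ) and τ_i ∈ [r, L^φ_{[r+l,r+l+1)}(ρ) − l⟩_a. -/
theorem bounded_unit_future_1a_of_empty {n : ℕ} (hn : 0 < n)
    (τ : Fin n → ℝ) (hmono : StrictMono τ) (h0 : τ ⟨0, hn⟩ = 0)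
    (hpos : ∀ j, 0 ≤ τ j)
    (φ : Fin n → Prop) (r l : ℤ) (hr : 0 ≤ r) (hl : 0 ≤ l) (aO bO : Bool) (i : Fin n)
    (hri : (r : ℝ) ≤ τ i ∧ τ i < (r : ℝ) + 1)
    (L1 : ℝ)
    (hL1 : IsLastIn τ φ (Set.Ico ((r : ℝ) + l) ((r : ℝ) + l + 1)) L1)
    (hempty : ∀ j, ¬ (φ j ∧ τ j ∈ Set.Ico ((r : ℝ) + l + 1) ((r : ℝ) + l + 2)))
    (hsat : ∃ j, i < j ∧ φ j ∧ lbMem aO (l : ℝ) (τ j - τ i) ∧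
        ubMem bO ((l : ℝ) + 1) (τ j - τ i)) :
    τ i < L1 ∧ (r : ℝ) ≤ τ i ∧ ubMem aO (L1 - (l : ℝ)) (τ i) :=
  bounded_unit_future_1a_of_empty_general τ hmono φ r l aO bO i hri L1 hL1 hempty hsat
end
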